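/- In the Lie algebra with brackets [X,Z]=X, [Y,Z]=Y, [X,W]=Y, [Y,W]=-X, for Q = pZ+qW and V = aX+bY+cZ+dW, one has ⟨V, [Q, ad*_V V]⟩ = (a²+b²)(dq + cp), where ad*_V is the adjoint of ad_V with respect to the inner product making {X,Y,Z,W} orthonormal. -/
import Mathlib


/-- The bracket determined by `[X,Z] = X`, `[Y,Z] = Y`, `[X,W] = Y`, `[Y,W] = -X`,
other basis brackets zero, in the orthonormal basis `X = e 0, Y = e 1, Z = e 2, W = e 3`. -/
def br2 (u v : Fin 4 → ℝ) : Fin 4 → ℝ :=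
  ![(u 0 * v 2 - u 2 * v 0) - (u 1 * v 3 - u 3 * v 1),
    (u 1 * v 2 - u 2 * v 1) + (u 0 * v 3 - u 3 * v 0), 0, 0]

/-- The inner product making the standard basis orthonormal. -/
def ip (u v : Fin 4 → ℝ) : ℝ := ∑ i, u i * v i

/-- With `Q = pZ + qW`, `V = aX + bY + cZ + dW`, and `adV*` the transpose of
`ad_V = [V, ·]` with respect to the inner product:
`⟨V, [Q, ad*_V V]⟩ = (a² + b²)(dq + cp)`. -/
theorem stmt_12 (p q a b c d : ℝ) (adVstar : (Fin 4 → ℝ) → (Fin 4 → ℝ))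
    (h : ∀ u w, ip (adVstar u) w = ip u (br2 ![a, b, c, d] w)) :
    ip ![a, b, c, d] (br2 ![0, 0, p, q] (adVstar ![a, b, c, d]))
      = (a ^ 2 + b ^ 2) * (d * q + c * p) := by
  have h0 := h ![a, b, c, d] ![1, 0, 0, 0]
  have h1 := h ![a, b, c, d] ![0, 1, 0, 0]
  simp [ip, br2, Fin.sum_univ_succ] at h0 h1 ⊢
  rw [h0, h1]; ring
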